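/- Let α be a real constant with α(α−3)(2α−3) ≠ 0 and set m := (2α³−9α²+9α)^{1/3} (real cube root). For f(x,u,p,q) = α·q²/p on the open set {(x,u,p,q) : p ≠ 0, q ≠ 0}, the invariants evaluate to I₁ = −2αq/p, I₂ = −α(2α−3)q²/(9p²), I₃ = (2α³−9α²+9α)q³/(27p³) ≠ 0, J₃ = mq/(3p), I₄ = m/(3p), I₅ = (α−3)/m, I₇ = 0, Q = 0; all the relative invariants I₆, I₈, I₁₀, I₁₁, I₁₂ vanish identically, K is the constant (3α²−9α+9)/m², and hence K_x = K_u = K_p = K_q = 0. -/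

import Mathlib

/-!
Invariants of the third-order ODE `u''' = f(x, u, u', u'')` under contact
transformations, following Cartan's equivalence method.
We write `p = u'`, `q = u''`.
-/

noncomputable section

/-- The real cube root of a real number. -/
def cbrt (y : ℝ) : ℝ := if 0 ≤ y then y ^ ((1 : ℝ)/3) else -((-y) ^ ((1 : ℝ)/3))

/-- Functions of `(x, u, p, q)`. -/
abbrev Fn : Type := ℝ → ℝ → ℝ → ℝ → ℝ

/-- Functions of `(x, u, p)`. -/
abbrev Fn3 : Type := ℝ → ℝ → ℝ → ℝ

/-- Partial derivative in `x` of a function of `(x,u,p,q)`. -/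
def pdx (g : Fn) : Fn := fun x u p q => deriv (fun t => g t u p q) x
/-- Partial derivative in `u` of a function of `(x,u,p,q)`. -/
def pdu (g : Fn) : Fn := fun x u p q => deriv (fun t => g x t p q) u
/-- Partial derivative in `p` of a function of `(x,u,p,q)`. -/
def pdp (g : Fn) : Fn := fun x u p q => deriv (fun t => g x u t q) p
/-- Partial derivative in `q` of a function of `(x,u,p,q)`. -/
def pdq (g : Fn) : Fn := fun x u p q => deriv (fun t => g x u p t) q

/-- Partial derivative in `x` of a function of `(x,u,p)`. -/
def pdx3 (g : Fn3) : Fn3 := fun x u p => deriv (fun t => g t u p) x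
/-- Partial derivative in `u` of a function of `(x,u,p)`. -/
def pdu3 (g : Fn3) : Fn3 := fun x u p => deriv (fun t => g x t p) u
/-- Partial derivative in `p` of a function of `(x,u,p)`. -/
def pdp3 (g : Fn3) : Fn3 := fun x u p => deriv (fun t => g x u t) p

/-- Lift of a function of `(x,u,p)` to a function of `(x,u,p,q)`, constant in `q`. -/
def lift (g : Fn3) : Fn := fun x u p _ => g x u p

/-- The total derivative operator `D̂ₓ = ∂ₓ + p ∂ᵤ + q ∂ₚ + f ∂_q` of the ODE `u''' = f`. -/
def Dhat (f g : Fn) : Fn := fun x u p q =>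
  pdx g x u p q + p * pdu g x u p q + q * pdp g x u p q + f x u p q * pdq g x u p q

/-- `I₁ = −f_q`. -/
def I1 (f : Fn) : Fn := fun x u p q => -(pdq f x u p q)

/-- `I₂ = −(2/9)I₁² − f_p − (1/3)D̂ₓI₁`. -/
def I2 (f : Fn) : Fn := fun x u p q =>
  -(2/9) * (I1 f x u p q)^2 - pdp f x u p q - (1/3) * Dhat f (I1 f) x u p q

/-- `I₃ = −(1/3)I₁I₂ − f_u − (1/2)D̂ₓI₂`. -/
def I3 (f : Fn) : Fn := fun x u p q =>
  -(1/3) * I1 f x u p q * I2 f x u p q - pdu f x u p q - (1/2) * Dhat f (I2 f) x u p q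

/-- `J₃`, the real cube root of `I₃`. -/
def J3 (f : Fn) : Fn := fun x u p q => cbrt (I3 f x u p q)

/-- `I₄ = (J₃)_q`. -/
def I4 (f : Fn) : Fn := pdq (J3 f)

/-- `I₅ = (1/(3J₃²))(I₁J₃ + 3D̂ₓJ₃)`. -/
def I5 (f : Fn) : Fn := fun x u p q =>
  (1 / (3 * (J3 f x u p q)^2)) * (I1 f x u p q * J3 f x u p q + 3 * Dhat f (J3 f) x u p q)

/-- `I₇ = −(I₅)_q J₃²`. -/
def I7 (f : Fn) : Fn := fun x u p q => -(pdq (I5 f) x u p q) * (J3 f x u p q)^2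

/-- `I₉ = 2J₃D̂ₓI₅ − I₂ + J₃²I₅²`. -/
def I9 (f : Fn) : Fn := fun x u p q =>
  2 * J3 f x u p q * Dhat f (I5 f) x u p q - I2 f x u p q
    + (J3 f x u p q)^2 * (I5 f x u p q)^2

/-- `K = I₉/J₃²`. -/
def Kinv (f : Fn) : Fn := fun x u p q => I9 f x u p q / (J3 f x u p q)^2

/-- `Q = −(I₁I₇ + 3J₃²(I₅)_p + 3(J₃)_u − 3J₃I₄D̂ₓI₅)/(3J₃)`. -/
def Qinv (f : Fn) : Fn := fun x u p q =>
  -(I1 f x u p q * I7 f x u p q + 3 * (J3 f x u p q)^2 * pdp (I5 f) x u p q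
      + 3 * pdu (J3 f) x u p q
      - 3 * J3 f x u p q * I4 f x u p q * Dhat f (I5 f) x u p q)
    / (3 * J3 f x u p q)

/-- `I₆ = (2/3)(J₃)_q I₁ − (1/3)(I₁)_q J₃ − 2(J₃)_p + 2J₃I₄I₅`. -/
def I6 (f : Fn) : Fn := fun x u p q =>
  (2/3) * pdq (J3 f) x u p q * I1 f x u p q - (1/3) * pdq (I1 f) x u p q * J3 f x u p q
    - 2 * pdp (J3 f) x u p q + 2 * J3 f x u p q * I4 f x u p q * I5 f x u p q

/-- `I₈ = (I₄)_q`. -/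
def I8 (f : Fn) : Fn := pdq (I4 f)

/-- `I₁₀ = I₄D̂ₓI₇ − J₃(I₇)_p + J₃²(I₄/J₃)_u`. -/
def I10 (f : Fn) : Fn := fun x u p q =>
  I4 f x u p q * Dhat f (I7 f) x u p q - J3 f x u p q * pdp (I7 f) x u p q
    + (J3 f x u p q)^2 *
      pdu (fun x' u' p' q' => I4 f x' u' p' q' / J3 f x' u' p' q') x u p q

/-- `I₁₁ = (J₃)_u − D̂ₓI₇`. -/
def I11 (f : Fn) : Fn := fun x u p q =>
  pdu (J3 f) x u p q - Dhat f (I7 f) x u p q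

/-- `I₁₂`. -/
def I12 (f : Fn) : Fn := fun x u p q =>
  6 * I1 f x u p q * J3 f x u p q *
      (I5 f x u p q * I7 f x u p q - I4 f x u p q * Dhat f (I5 f) x u p q)
    - 18 * (J3 f x u p q)^3 * I4 f x u p q
    + 6 * pdp (I5 f) x u p q * I1 f x u p q * (J3 f x u p q)^2
    - 18 * I2 f x u p q * J3 f x u p q * I4 f x u p q * I5 f x u p q
    - 18 * J3 f x u p q * I7 f x u p q * Dhat f (I5 f) x u p q
    + 18 * (J3 f x u p q)^2 * pdu (I5 f) x u p q
    + 18 * I2 f x u p q * Dhat f (I4 f) x u p q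
    + 2 * (I1 f x u p q)^2 * I7 f x u p q
    - 9 * pdp (I2 f) x u p q * J3 f x u p q
    + 6 * (J3 f x u p q)^2 *
        pdu (fun x' u' p' q' => I1 f x' u' p' q' / J3 f x' u' p' q') x u p q
    + 36 * I2 f x u p q * I7 f x u p q

/-- `I₁₃ = (J₃I₄I₅ − I₇)D̂ₓK + J₃K_u − J₃²I₅K_p`. -/
def I13 (f : Fn) : Fn := fun x u p q =>
  (J3 f x u p q * I4 f x u p q * I5 f x u p q - I7 f x u p q) * Dhat f (Kinv f) x u p q
    + J3 f x u p q * pdu (Kinv f) x u p q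
    - (J3 f x u p q)^2 * I5 f x u p q * pdp (Kinv f) x u p q

/-- `I₁₄ = K_q`. -/
def I14 (f : Fn) : Fn := pdq (Kinv f)

/-- `I₁₅ = I₄D̂ₓK − J₃K_p`. -/
def I15 (f : Fn) : Fn := fun x u p q =>
  I4 f x u p q * Dhat f (Kinv f) x u p q - J3 f x u p q * pdp (Kinv f) x u p q

/-!
On `{p ≠ 0, q ≠ 0}` the right-hand side `α q²/p = α p⁻¹ q²` is a Laurent monomial in `(p, q)`,
and the total derivative of that ODE sends `c pᵃ qᵇ` to `c (a + α b) pᵃ⁻¹ qᵇ⁺¹`. Since partial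
derivatives only see an open neighbourhood, every invariant is therefore, on that open set, a
monomial in `p, q` whose coefficient and exponents are read off step by step. `I₃` is the cube of
`m q/(3p)`, which gives `J₃`; `I₅` and `K` come out of weight `(0, 0)`, i.e. constant, and this
kills all the derivatives of `I₅`, `I₇` and `K` occurring in the relative invariants.
-/

theorem pow_three_cbrt (y : ℝ) : cbrt y ^ 3 = y := by
  have key : ∀ z : ℝ, 0 ≤ z → (z ^ ((1 : ℝ) / 3)) ^ 3 = z := fun z hz => by
    rw [← Real.rpow_natCast, ← Real.rpow_mul hz]; norm_num
  unfold cbrt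
  split_ifs with hy
  · exact key y hy
  · rw [neg_pow, key (-y) (by linarith)]; ring

theorem cbrt_pow_three (z : ℝ) : cbrt (z ^ 3) = z :=
  (Odd.strictMono_pow (R := ℝ) ⟨1, rfl⟩).injective (pow_three_cbrt (z ^ 3))

def EqOnPQNeZero (g h : Fn) : Prop := ∀ x u p q, p ≠ 0 → q ≠ 0 → g x u p q = h x u p q

namespace EqOnPQNeZero

variable {g h k : Fn}

theorem trans (hgh : EqOnPQNeZero g h) (hhk : EqOnPQNeZero h k) : EqOnPQNeZero g k :=
  fun x u p q hp hq => (hgh x u p q hp hq).trans (hhk x u p q hp hq)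

theorem pdx (hgh : EqOnPQNeZero g h) : EqOnPQNeZero (pdx g) (pdx h) := fun x u p q hp hq =>
  congrArg (deriv · x) (funext fun t => hgh t u p q hp hq)

theorem pdu (hgh : EqOnPQNeZero g h) : EqOnPQNeZero (pdu g) (pdu h) := fun x u p q hp hq =>
  congrArg (deriv · u) (funext fun t => hgh x t p q hp hq)

theorem pdp (hgh : EqOnPQNeZero g h) : EqOnPQNeZero (pdp g) (pdp h) := fun x u _ q hp hq =>
  Filter.EventuallyEq.deriv_eq <| (eventually_ne_nhds hp).mono fun t ht => hgh x u t q ht hq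

theorem pdq (hgh : EqOnPQNeZero g h) : EqOnPQNeZero (pdq g) (pdq h) := fun x u p _ hp hq =>
  Filter.EventuallyEq.deriv_eq <| (eventually_ne_nhds hq).mono fun t ht => hgh x u p t hp ht

theorem dhat (f : Fn) (hgh : EqOnPQNeZero g h) : EqOnPQNeZero (Dhat f g) (Dhat f h) :=
  fun x u p q hp hq => by
    simp only [Dhat, hgh.pdx x u p q hp hq, hgh.pdu x u p q hp hq, hgh.pdp x u p q hp hq,
      hgh.pdq x u p q hp hq]

section Constant

variable {c : ℝ}

theorem pdx_const (hg : EqOnPQNeZero g fun _ _ _ _ => c) : EqOnPQNeZero (_root_.pdx g) 0 :=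
  hg.pdx.trans fun x _ _ _ _ _ => deriv_const x c

theorem pdu_const (hg : EqOnPQNeZero g fun _ _ _ _ => c) : EqOnPQNeZero (_root_.pdu g) 0 :=
  hg.pdu.trans fun _ u _ _ _ _ => deriv_const u c

theorem pdp_const (hg : EqOnPQNeZero g fun _ _ _ _ => c) : EqOnPQNeZero (_root_.pdp g) 0 :=
  hg.pdp.trans fun _ _ p _ _ _ => deriv_const p c

theorem pdq_const (hg : EqOnPQNeZero g fun _ _ _ _ => c) : EqOnPQNeZero (_root_.pdq g) 0 :=
  hg.pdq.trans fun _ _ _ q _ _ => deriv_const q c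

theorem dhat_const (f : Fn) (hg : EqOnPQNeZero g fun _ _ _ _ => c) : EqOnPQNeZero (Dhat f g) 0 :=
  fun x u p q hp hq => by
    simp [Dhat, hg.pdx_const x u p q hp hq, hg.pdu_const x u p q hp hq,
      hg.pdp_const x u p q hp hq, hg.pdq_const x u p q hp hq]

end Constant

end EqOnPQNeZero

def pqMono (c : ℝ) (a b : ℤ) : Fn := fun _ _ p q => c * p ^ a * q ^ b

section pqMono

variable (c : ℝ) (a b : ℤ)

theorem pdx_pqMono : pdx (pqMono c a b) = 0 := by
  funext x u p q; simp [pdx, pqMono]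

theorem pdu_pqMono : pdu (pqMono c a b) = 0 := by
  funext x u p q; simp [pdu, pqMono]

theorem pdp_pqMono : pdp (pqMono c a b) = pqMono (c * a) (a - 1) b := by
  funext x u p q
  simp only [pdp, pqMono]
  rw [deriv_mul_const_field, deriv_const_mul_field, deriv_zpow]; ring

theorem pdq_pqMono : pdq (pqMono c a b) = pqMono (c * b) a (b - 1) := by
  funext x u p q
  simp only [pdq, pqMono]
  rw [deriv_const_mul_field, deriv_zpow]; ring

theorem dhat_pqMono (α : ℝ) :
    EqOnPQNeZero (Dhat (pqMono α (-1) 2) (pqMono c a b))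
      (pqMono (c * (a + α * b)) (a - 1) (b + 1)) := by
  intro x u p q hp hq
  simp only [Dhat, pdx_pqMono, pdu_pqMono, pdp_pqMono, pdq_pqMono, pqMono, Pi.zero_apply]
  rw [zpow_sub_one₀ hp, zpow_sub_one₀ hq, zpow_add_one₀ hq]
  field_simp
  ring

end pqMono

namespace Example1

variable (α : ℝ)

theorem I1_eq : EqOnPQNeZero (I1 (pqMono α (-1) 2)) (pqMono (-2 * α) (-1) 1) := by
  intro x u p q _ _
  simp only [I1, pdq_pqMono, pqMono]
  push_cast
  ring

theorem I2_eq :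
    EqOnPQNeZero (I2 (pqMono α (-1) 2)) (pqMono (-(α * (2 * α - 3)) / 9) (-2) 2) := by
  intro x u p q hp hq
  have hD := ((I1_eq α).dhat _).trans (dhat_pqMono _ _ _ α) x u p q hp hq
  simp only [I2, I1_eq α x u p q hp hq, hD, pdp_pqMono, pqMono]
  norm_num
  field_simp
  ring

theorem I3_eq :
    EqOnPQNeZero (I3 (pqMono α (-1) 2)) (pqMono ((2*α^3 - 9*α^2 + 9*α) / 27) (-3) 3) := by
  intro x u p q hp hq
  have hD := ((I2_eq α).dhat _).trans (dhat_pqMono _ _ _ α) x u p q hp hq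
  simp only [I3, I1_eq α x u p q hp hq, I2_eq α x u p q hp hq, hD, pdu_pqMono, pqMono]
  norm_num
  field_simp
  ring

variable {α} {m : ℝ}

theorem J3_eq (hm : m ^ 3 = 2*α^3 - 9*α^2 + 9*α) :
    EqOnPQNeZero (J3 (pqMono α (-1) 2)) (pqMono (m / 3) (-1) 1) := by
  intro x u p q hp hq
  rw [J3, I3_eq α x u p q hp hq, ← cbrt_pow_three (pqMono (m / 3) (-1) 1 x u p q)]
  congr 1
  simp only [pqMono, ← hm]
  norm_num
  field_simp
  ring

theorem I4_eq (hm : m ^ 3 = 2*α^3 - 9*α^2 + 9*α) :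
    EqOnPQNeZero (I4 (pqMono α (-1) 2)) (pqMono (m / 3) (-1) 0) := by
  intro x u p q hp hq
  rw [I4, (J3_eq hm).pdq x u p q hp hq, pdq_pqMono]
  simp [pqMono]

theorem I5_eq (hm : m ^ 3 = 2*α^3 - 9*α^2 + 9*α) (hm0 : m ≠ 0) :
    EqOnPQNeZero (I5 (pqMono α (-1) 2)) fun _ _ _ _ => (α - 3) / m := by
  intro x u p q hp hq
  have hD := ((J3_eq hm).dhat _).trans (dhat_pqMono _ _ _ α) x u p q hp hq
  simp only [I5, I1_eq α x u p q hp hq, J3_eq hm x u p q hp hq, hD, pqMono]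
  norm_num
  field_simp
  ring

theorem I7_eq (hm : m ^ 3 = 2*α^3 - 9*α^2 + 9*α) (hm0 : m ≠ 0) :
    EqOnPQNeZero (I7 (pqMono α (-1) 2)) fun _ _ _ _ => 0 := by
  intro x u p q hp hq
  simp [I7, (I5_eq hm hm0).pdq_const x u p q hp hq]

theorem Kinv_eq (hm : m ^ 3 = 2*α^3 - 9*α^2 + 9*α) (hm0 : m ≠ 0) :
    EqOnPQNeZero (Kinv (pqMono α (-1) 2)) fun _ _ _ _ => (3*α^2 - 9*α + 9) / m^2 := by
  intro x u p q hp hq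
  simp only [Kinv, I9, ((I5_eq hm hm0).dhat_const _) x u p q hp hq, I2_eq α x u p q hp hq,
    J3_eq hm x u p q hp hq, I5_eq hm hm0 x u p q hp hq, pqMono, Pi.zero_apply]
  norm_num
  field_simp
  ring

theorem Qinv_eq (hm : m ^ 3 = 2*α^3 - 9*α^2 + 9*α) (hm0 : m ≠ 0) :
    EqOnPQNeZero (Qinv (pqMono α (-1) 2)) 0 := by
  intro x u p q hp hq
  simp [Qinv, I7_eq hm hm0 x u p q hp hq, (I5_eq hm hm0).pdp_const x u p q hp hq,
    (J3_eq hm).pdu x u p q hp hq, pdu_pqMono, (I5_eq hm hm0).dhat_const _ x u p q hp hq]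

theorem I6_eq (hm : m ^ 3 = 2*α^3 - 9*α^2 + 9*α) (hm0 : m ≠ 0) :
    EqOnPQNeZero (I6 (pqMono α (-1) 2)) 0 := by
  intro x u p q hp hq
  simp only [I6, (J3_eq hm).pdq x u p q hp hq, (I1_eq α).pdq x u p q hp hq,
    (J3_eq hm).pdp x u p q hp hq, pdq_pqMono, pdp_pqMono, I1_eq α x u p q hp hq,
    J3_eq hm x u p q hp hq, I4_eq hm x u p q hp hq, I5_eq hm hm0 x u p q hp hq, pqMono,
    Pi.zero_apply]
  norm_num
  field_simp
  ring

theorem I8_eq (hm : m ^ 3 = 2*α^3 - 9*α^2 + 9*α) : EqOnPQNeZero (I8 (pqMono α (-1) 2)) 0 := by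
  intro x u p q hp hq
  simp [I8, (I4_eq hm).pdq x u p q hp hq, pdq_pqMono, pqMono]

theorem I10_eq (hm : m ^ 3 = 2*α^3 - 9*α^2 + 9*α) (hm0 : m ≠ 0) :
    EqOnPQNeZero (I10 (pqMono α (-1) 2)) 0 := by
  have hquot : EqOnPQNeZero
      (fun x u p q => I4 (pqMono α (-1) 2) x u p q / J3 (pqMono α (-1) 2) x u p q)
      (pqMono 1 0 (-1)) := by
    intro x u p q hp hq
    simp only [I4_eq hm x u p q hp hq, J3_eq hm x u p q hp hq, pqMono]
    norm_num
    field_simp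
  intro x u p q hp hq
  simp [I10, (I7_eq hm hm0).dhat_const _ x u p q hp hq, (I7_eq hm hm0).pdp_const x u p q hp hq,
    hquot.pdu x u p q hp hq, pdu_pqMono]

theorem I11_eq (hm : m ^ 3 = 2*α^3 - 9*α^2 + 9*α) (hm0 : m ≠ 0) :
    EqOnPQNeZero (I11 (pqMono α (-1) 2)) 0 := by
  intro x u p q hp hq
  simp [I11, (J3_eq hm).pdu x u p q hp hq, pdu_pqMono,
    (I7_eq hm hm0).dhat_const _ x u p q hp hq]

theorem I12_eq (hm : m ^ 3 = 2*α^3 - 9*α^2 + 9*α) (hm0 : m ≠ 0) :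
    EqOnPQNeZero (I12 (pqMono α (-1) 2)) 0 := by
  have hquot : EqOnPQNeZero
      (fun x u p q => I1 (pqMono α (-1) 2) x u p q / J3 (pqMono α (-1) 2) x u p q)
      fun _ _ _ _ => -6 * α / m := by
    intro x u p q hp hq
    simp only [I1_eq α x u p q hp hq, J3_eq hm x u p q hp hq, pqMono]
    field_simp
    ring
  intro x u p q hp hq
  have hI5 := I5_eq hm hm0
  have hI7 := I7_eq hm hm0
  have hDI4 := ((I4_eq hm).dhat _).trans (dhat_pqMono _ _ _ α) x u p q hp hq
  simp only [I12, hI7 x u p q hp hq, hI5.dhat_const _ x u p q hp hq, hI5.pdp_const x u p q hp hq,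
    hI5.pdu_const x u p q hp hq, hquot.pdu_const x u p q hp hq, hDI4,
    (I2_eq α).pdp x u p q hp hq, pdp_pqMono, I1_eq α x u p q hp hq, I2_eq α x u p q hp hq,
    J3_eq hm x u p q hp hq, I4_eq hm x u p q hp hq, hI5 x u p q hp hq, pqMono, Pi.zero_apply]
  norm_num
  field_simp
  linear_combination (-(162:ℝ)*q^3*m) * hm

end Example1

theorem example1_eq_pqMono (α : ℝ) : (fun _ _ p q => α * q ^ 2 / p : Fn) = pqMono α (-1) 2 := by
  funext x u p q
  simp only [pqMono, zpow_neg, zpow_ofNat]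
  ring

/-- For `f(x,u,p,q) = α·q²/p` on `{p ≠ 0, q ≠ 0}`, with
`α(α−3)(2α−3) ≠ 0` and `m` the real cube root of `2α³−9α²+9α`, the invariants evaluate
as listed, all the relative invariants `I₆, I₈, I₁₀, I₁₁, I₁₂` vanish identically, `K` is
the constant `(3α²−9α+9)/m²`, and `K_x = K_u = K_p = K_q = 0`. -/
theorem invariants_of_example1 (α m : ℝ)
    (hα : α * (α - 3) * (2*α - 3) ≠ 0)
    (hm : m = cbrt (2*α^3 - 9*α^2 + 9*α))
    (f : Fn) (hfdef : f = fun _ _ p q => α * q^2 / p) :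
    ∀ x u p q : ℝ, p ≠ 0 → q ≠ 0 →
      I1 f x u p q = -(2*α*q) / p ∧
      I2 f x u p q = -(α * (2*α - 3) * q^2) / (9 * p^2) ∧
      I3 f x u p q = (2*α^3 - 9*α^2 + 9*α) * q^3 / (27 * p^3) ∧
      I3 f x u p q ≠ 0 ∧
      J3 f x u p q = m * q / (3 * p) ∧
      I4 f x u p q = m / (3 * p) ∧
      I5 f x u p q = (α - 3) / m ∧
      I7 f x u p q = 0 ∧
      Qinv f x u p q = 0 ∧
      I6 f x u p q = 0 ∧
      I8 f x u p q = 0 ∧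
      I10 f x u p q = 0 ∧
      I11 f x u p q = 0 ∧
      I12 f x u p q = 0 ∧
      Kinv f x u p q = (3*α^2 - 9*α + 9) / m^2 ∧
      pdx (Kinv f) x u p q = 0 ∧
      pdu (Kinv f) x u p q = 0 ∧
      pdp (Kinv f) x u p q = 0 ∧
      pdq (Kinv f) x u p q = 0 := by
  subst hfdef
  rw [example1_eq_pqMono]
  have hm3 : m ^ 3 = 2*α^3 - 9*α^2 + 9*α := hm ▸ pow_three_cbrt _
  have hcube : 2*α^3 - 9*α^2 + 9*α ≠ 0 := by convert hα using 1; ring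
  have hm0 : m ≠ 0 := by
    rintro rfl
    exact hcube (by rw [← hm3]; ring)
  intro x u p q hp hq
  have at_pt {g h : Fn} (e : EqOnPQNeZero g h) : g x u p q = h x u p q := e x u p q hp hq
  have hK := Example1.Kinv_eq hm3 hm0
  open Example1 in
  rw [at_pt hK.pdx_const, at_pt hK.pdu_const, at_pt hK.pdp_const, at_pt hK.pdq_const, at_pt hK,
    at_pt (I1_eq α), at_pt (I2_eq α), at_pt (I3_eq α),
    at_pt (J3_eq hm3), at_pt (I4_eq hm3), at_pt (I5_eq hm3 hm0),
    at_pt (I7_eq hm3 hm0), at_pt (Qinv_eq hm3 hm0),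
    at_pt (I6_eq hm3 hm0), at_pt (I8_eq hm3), at_pt (I10_eq hm3 hm0),
    at_pt (I11_eq hm3 hm0), at_pt (I12_eq hm3 hm0)]
  simp only [pqMono, Pi.zero_apply, and_true]
  refine ⟨?_, ?_, ?_, by simp [hcube, hp, hq], ?_, ?_⟩ <;> norm_num <;> field_simp

end
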